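/- arXiv:2212.03685 — 2 statements merged into one kernel-verified Lean document; each statement's English description precedes it below -/
import Mathlib

section
/- Let f : D → ℝ≥0 be λ-Lipschitz, let R ⊆ D be an axis-aligned square of side length s, and suppose f(x,y) = z for some (x,y) ∈ R. Then the volume ∫_R f is at most s²·(z + (2√2/3)·λ·s). -/
/-!
By the Lipschitz bound, `f` lies below the cone `p ↦ z + λ‖p - q‖` on `R`, so
`∫_R f ≤ s²z + λ ∫_R ‖p - q‖`. Since `‖w‖² ≤ w₁² + w₂²`, AM–GM gives
`2s‖w‖ ≤ w₁² + w₂² + s²`; integrating this polynomial over the square yields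
`∫_R ‖p - q‖ ≤ (5/6)s³`, and `5/6 ≤ 2√2/3`.
-/

open MeasureTheory Set

theorem integral_Icc_sq_sub_le {a b t : ℝ} (ht : t ∈ Icc a b) :
    ∫ x in Icc a b, (x - t) ^ 2 ≤ (b - a) ^ 3 / 3 := by
  rw [integral_Icc_eq_integral_Ioc, ← intervalIntegral.integral_of_le (ht.1.trans ht.2),
    intervalIntegral.integral_comp_sub_right (· ^ 2) t, integral_pow]
  nlinarith [ht.1, ht.2, mul_nonneg (sub_nonneg.2 ht.1) (sub_nonneg.2 ht.2)]

theorem measureReal_Icc_prod {a b : ℝ × ℝ} (h : a ≤ b) :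
    volume.real (Icc a b) = (b.1 - a.1) * (b.2 - a.2) := by
  rw [measureReal_def, Icc_prod_eq, Measure.volume_eq_prod, Measure.prod_prod,
    Real.volume_Icc, Real.volume_Icc, ENNReal.toReal_mul, ENNReal.toReal_ofReal (sub_nonneg.2 h.1),
    ENNReal.toReal_ofReal (sub_nonneg.2 h.2)]

theorem setIntegral_Icc_sq_add_sq_le {a b q : ℝ × ℝ} (hq : q ∈ Icc a b) :
    ∫ p in Icc a b, ((p.1 - q.1) ^ 2 + (p.2 - q.2) ^ 2) ≤
      ((b.1 - a.1) ^ 2 + (b.2 - a.2) ^ 2) / 3 * ((b.1 - a.1) * (b.2 - a.2)) := by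
  obtain ⟨⟨hq₁, hq₂⟩, ⟨hq₁', hq₂'⟩⟩ := hq
  have hvol₁ : volume.real (Icc a.1 b.1) = b.1 - a.1 := by
    simp [measureReal_def, hq₁.trans hq₁']
  have hvol₂ : volume.real (Icc a.2 b.2) = b.2 - a.2 := by
    simp [measureReal_def, hq₂.trans hq₂']
  have h₁ : ∫ p in Icc a b, (p.1 - q.1) ^ 2 =
      (∫ x in Icc a.1 b.1, (x - q.1) ^ 2) * (b.2 - a.2) := by
    simpa [← Icc_prod_eq, ← Measure.volume_eq_prod, hvol₂] using
      setIntegral_prod_mul (μ := volume) (ν := volume) (fun x : ℝ ↦ (x - q.1) ^ 2) (fun _ ↦ (1 : ℝ))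
        (Icc a.1 b.1) (Icc a.2 b.2)
  have h₂ : ∫ p in Icc a b, (p.2 - q.2) ^ 2 =
      (b.1 - a.1) * ∫ y in Icc a.2 b.2, (y - q.2) ^ 2 := by
    simpa [← Icc_prod_eq, ← Measure.volume_eq_prod, hvol₁] using
      setIntegral_prod_mul (μ := volume) (ν := volume) (fun _ ↦ (1 : ℝ)) (fun y : ℝ ↦ (y - q.2) ^ 2)
        (Icc a.1 b.1) (Icc a.2 b.2)
  rw [integral_add (Continuous.integrableOn_Icc (by fun_prop))
    (Continuous.integrableOn_Icc (by fun_prop)), h₁, h₂]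
  have hx := integral_Icc_sq_sub_le ⟨hq₁, hq₁'⟩
  have hy := integral_Icc_sq_sub_le ⟨hq₂, hq₂'⟩
  nlinarith [sub_nonneg.2 (hq₁.trans hq₁'), sub_nonneg.2 (hq₂.trans hq₂')]

theorem norm_sq_le_fst_sq_add_snd_sq (w : ℝ × ℝ) : ‖w‖ ^ 2 ≤ w.1 ^ 2 + w.2 ^ 2 := by
  rw [Prod.norm_def, Real.norm_eq_abs, Real.norm_eq_abs]
  rcases max_cases |w.1| |w.2| with ⟨h, -⟩ | ⟨h, -⟩ <;> rw [h, sq_abs] <;> nlinarith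

theorem setIntegral_Icc_norm_sub_le {a q : ℝ × ℝ} {s : ℝ} (hs : 0 < s)
    (hq : q ∈ Icc a (a + (s, s))) :
    ∫ p in Icc a (a + (s, s)), ‖p - q‖ ≤ 5 / 6 * s ^ 3 := by
  have hle : ∀ p : ℝ × ℝ, ‖p - q‖ ≤ ((p.1 - q.1) ^ 2 + (p.2 - q.2) ^ 2 + s ^ 2) / (2 * s) :=
    fun p ↦ by
      rw [le_div_iff₀ (by positivity)]
      have hnorm := norm_sq_le_fst_sq_add_snd_sq (p - q)
      rw [Prod.fst_sub, Prod.snd_sub] at hnorm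
      nlinarith [sq_nonneg (‖p - q‖ - s)]
  have hsq := setIntegral_Icc_sq_add_sq_le hq
  have hvol := measureReal_Icc_prod (hq.1.trans hq.2)
  simp only [Prod.fst_add, Prod.snd_add, add_sub_cancel_left] at hsq hvol
  calc ∫ p in Icc a (a + (s, s)), ‖p - q‖
      ≤ ∫ p in Icc a (a + (s, s)), ((p.1 - q.1) ^ 2 + (p.2 - q.2) ^ 2 + s ^ 2) / (2 * s) :=
        setIntegral_mono (Continuous.integrableOn_Icc (by fun_prop))
          (Continuous.integrableOn_Icc (by fun_prop)) hle
    _ = ((∫ p in Icc a (a + (s, s)), ((p.1 - q.1) ^ 2 + (p.2 - q.2) ^ 2)) + s ^ 2 * s ^ 2)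
          / (2 * s) := by
        rw [integral_div, integral_add (Continuous.integrableOn_Icc (by fun_prop))
          (Continuous.integrableOn_Icc continuous_const), setIntegral_const, hvol, smul_eq_mul]
        ring
    _ ≤ 5 / 6 * s ^ 3 := by
        rw [div_le_iff₀ (by positivity)]
        nlinarith

theorem volume_upper_bound_general
    (lam s z : ℝ) (f : ℝ × ℝ → ℝ) (a q : ℝ × ℝ)
    (hlam : 0 < lam) (hs : 0 < s)
    (R : Set (ℝ × ℝ)) (hR : R = Set.Icc a (a + (s, s)))
    (hlip : ∀ p ∈ R, ∀ p' ∈ R, |f p - f p'| ≤ lam * ‖p - p'‖)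
    (hq : q ∈ R) (hz : f q = z) :
    ∫ p in R, f p ≤ s ^ 2 * (z + (2 * Real.sqrt 2 / 3) * lam * s) := by
  subst hR z
  have hf : IntegrableOn f (Icc a (a + (s, s))) :=
    (LipschitzOnWith.of_dist_le_mul (K := ⟨lam, hlam.le⟩) hlip).continuousOn.integrableOn_compact
      isCompact_Icc
  have hcone : ∀ p ∈ Icc a (a + (s, s)), f p ≤ f q + lam * ‖p - q‖ := fun p hp ↦ by
    linarith [le_abs_self (f p - f q), hlip p hp q hq]
  have hvol := measureReal_Icc_prod (hq.1.trans hq.2)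
  simp only [Prod.fst_add, Prod.snd_add, add_sub_cancel_left] at hvol
  have hsqrt : (5 / 4 : ℝ) ≤ Real.sqrt 2 := Real.le_sqrt_of_sq_le (by norm_num)
  calc ∫ p in Icc a (a + (s, s)), f p
      ≤ ∫ p in Icc a (a + (s, s)), (f q + lam * ‖p - q‖) :=
        setIntegral_mono_on hf (Continuous.integrableOn_Icc (by fun_prop)) measurableSet_Icc hcone
    _ = s ^ 2 * f q + lam * ∫ p in Icc a (a + (s, s)), ‖p - q‖ := by
        rw [integral_add (Continuous.integrableOn_Icc continuous_const)
            (Continuous.integrableOn_Icc (by fun_prop)),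
          setIntegral_const, hvol, smul_eq_mul, integral_const_mul]
        ring
    _ ≤ s ^ 2 * f q + lam * (5 / 6 * s ^ 3) := by
        gcongr
        exact setIntegral_Icc_norm_sub_le hs hq
    _ ≤ s ^ 2 * (f q + (2 * Real.sqrt 2 / 3) * lam * s) := by
        nlinarith [mul_pos hlam (pow_pos hs 3)]

/-- If `f` is nonnegative and `λ`-Lipschitz on an axis-aligned square `R`
of side length `s`, and `f(x,y) = z` for some `(x,y) ∈ R`,
then `∫_R f ≤ s²·(z + (2√2/3)·λ·s)`. -/
theorem volume_upper_bound
    (lam s z : ℝ) (f : ℝ × ℝ → ℝ) (a q : ℝ × ℝ)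
    (hlam : 0 < lam) (hs : 0 < s)
    (R : Set (ℝ × ℝ)) (hR : R = Set.Icc a (a + (s, s)))
    (hf0 : ∀ p ∈ R, 0 ≤ f p)
    (hlip : ∀ p ∈ R, ∀ p' ∈ R, |f p - f p'| ≤ lam * ‖p - p'‖)
    (hint : IntegrableOn f R)
    (hq : q ∈ R) (hz : f q = z) :
    ∫ p in R, f p ≤ s ^ 2 * (z + (2 * Real.sqrt 2 / 3) * lam * s) :=
  volume_upper_bound_general lam s z f a q hlam hs R hR hlip hq hz
end

section
/- Let f : D → ℝ≥0 be λ-Lipschitz, and let R be a square cell of side length s with average value h = (1/s²)∫_R f. Then for all (x,y) ∈ R: |f(x,y) - h| ≤ (2√2/3)·λ·s. -/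
/-!
Averaging `|f q - f p| ≤ λ ‖q - p‖` over the square bounds `|f q - h|` by `λ` times the
mean distance from `q`. By AM–GM, `2 s ‖x‖ ≤ x₁² + x₂² + s²` for the sup norm, and the mean
of `(q_i - p_i)²` over a side of length `s` is at most `s²/3`; hence the mean distance is at
most `(s²/3 + s²/3 + s²) / (2 s) = 5 s / 6 ≤ 2√2 s / 3`.
-/

open MeasureTheory Set

lemma abs_measureReal_mul_sub_setIntegral_le {α : Type*} [MeasurableSpace α] {μ : Measure α}
    {R : Set α} {f g : α → ℝ} {q : α} (hR : MeasurableSet R) (hμR : μ R ≠ ⊤)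
    (hf : IntegrableOn f R μ) (hg : IntegrableOn g R μ) (hfg : ∀ p ∈ R, |f q - f p| ≤ g p) :
    |μ.real R * f q - ∫ p in R, f p ∂μ| ≤ ∫ p in R, g p ∂μ := by
  have hconst : IntegrableOn (fun _ ↦ f q) R μ := integrableOn_const hμR
  calc |μ.real R * f q - ∫ p in R, f p ∂μ| = |∫ p in R, (f q - f p) ∂μ| := by
        rw [integral_sub hconst hf, setIntegral_const, smul_eq_mul]
    _ ≤ ∫ p in R, |f q - f p| ∂μ := abs_integral_le_integral_abs
    _ ≤ ∫ p in R, g p ∂μ := setIntegral_mono_on (hconst.sub hf).abs hg hR hfg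

lemma two_mul_mul_norm_le_add_sq (s : ℝ) (x : ℝ × ℝ) :
    2 * s * ‖x‖ ≤ x.1 ^ 2 + x.2 ^ 2 + s ^ 2 := by
  have h₁ := two_mul_le_add_sq s |x.1|
  have h₂ := two_mul_le_add_sq s |x.2|
  rw [sq_abs] at h₁ h₂
  rw [Prod.norm_def, Real.norm_eq_abs, Real.norm_eq_abs]
  rcases le_total |x.1| |x.2| with h | h
  · rw [max_eq_right h]; nlinarith [sq_nonneg x.1]
  · rw [max_eq_left h]; nlinarith [sq_nonneg x.2]

lemma setIntegral_Icc_sq_sub_le {l r q : ℝ} (hl : l ≤ q) (hr : q ≤ r) :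
    ∫ x in Icc l r, (q - x) ^ 2 ≤ (r - l) ^ 3 / 3 := by
  rw [integral_Icc_eq_integral_Ioc, ← intervalIntegral.integral_of_le (hl.trans hr),
    intervalIntegral.integral_comp_sub_left (fun u ↦ u ^ 2) q, integral_pow]
  nlinarith [mul_nonneg (mul_nonneg (sub_nonneg.2 hl) (sub_nonneg.2 hr))
    (sub_nonneg.2 (hl.trans hr))]

lemma volume_real_Icc_add_square (a : ℝ × ℝ) {s : ℝ} (hs : 0 ≤ s) :
    volume.real (Icc a (a + (s, s))) = s ^ 2 := by
  rw [Icc_prod_eq, Measure.volume_eq_prod, measureReal_prod_prod, Real.volume_real_Icc_of_le,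
    Real.volume_real_Icc_of_le] <;> simp [hs, sq]

lemma setIntegral_Icc_prod_fst {a b : ℝ × ℝ} (h : a.2 ≤ b.2) (g : ℝ → ℝ) :
    ∫ p in Icc a b, g p.1 = (b.2 - a.2) * ∫ x in Icc a.1 b.1, g x := by
  rw [Icc_prod_eq, Measure.volume_eq_prod, ← Measure.prod_restrict, integral_fun_fst,
    measureReal_restrict_apply_univ, Real.volume_real_Icc_of_le h, smul_eq_mul]

lemma setIntegral_Icc_prod_snd {a b : ℝ × ℝ} (h : a.1 ≤ b.1) (g : ℝ → ℝ) :
    ∫ p in Icc a b, g p.2 = (b.1 - a.1) * ∫ y in Icc a.2 b.2, g y := by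
  rw [Icc_prod_eq, Measure.volume_eq_prod, ← Measure.prod_restrict, integral_fun_snd,
    measureReal_restrict_apply_univ, Real.volume_real_Icc_of_le h, smul_eq_mul]

section Square

variable {a q : ℝ × ℝ} {s : ℝ}

lemma setIntegral_Icc_add_square_sq_sub_fst_le (hs : 0 ≤ s) (hq : q ∈ Icc a (a + (s, s))) :
    ∫ p in Icc a (a + (s, s)), (q.1 - p.1) ^ 2 ≤ s ^ 4 / 3 := by
  have h := setIntegral_Icc_sq_sub_le hq.1.1 hq.2.1
  rw [setIntegral_Icc_prod_fst (by simpa using hs) fun x ↦ (q.1 - x) ^ 2]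
  simp only [Prod.fst_add, Prod.snd_add, add_sub_cancel_left] at h ⊢
  nlinarith

lemma setIntegral_Icc_add_square_sq_sub_snd_le (hs : 0 ≤ s) (hq : q ∈ Icc a (a + (s, s))) :
    ∫ p in Icc a (a + (s, s)), (q.2 - p.2) ^ 2 ≤ s ^ 4 / 3 := by
  have h := setIntegral_Icc_sq_sub_le hq.1.2 hq.2.2
  rw [setIntegral_Icc_prod_snd (by simpa using hs) fun y ↦ (q.2 - y) ^ 2]
  simp only [Prod.fst_add, Prod.snd_add, add_sub_cancel_left] at h ⊢
  nlinarith

lemma setIntegral_Icc_add_square_norm_sub_le (hs : 0 < s) (hq : q ∈ Icc a (a + (s, s))) :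
    ∫ p in Icc a (a + (s, s)), ‖q - p‖ ≤ 5 / 6 * s ^ 3 := by
  have hint₁ : IntegrableOn (fun p : ℝ × ℝ ↦ (q.1 - p.1) ^ 2) (Icc a (a + (s, s))) :=
    (by fun_prop : Continuous fun p : ℝ × ℝ ↦ (q.1 - p.1) ^ 2).integrableOn_Icc
  have hint₂ : IntegrableOn (fun p : ℝ × ℝ ↦ (q.2 - p.2) ^ 2) (Icc a (a + (s, s))) :=
    (by fun_prop : Continuous fun p : ℝ × ℝ ↦ (q.2 - p.2) ^ 2).integrableOn_Icc
  have hint : IntegrableOn (fun p : ℝ × ℝ ↦ (q.1 - p.1) ^ 2 + (q.2 - p.2) ^ 2)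
      (Icc a (a + (s, s))) := hint₁.add hint₂
  have hconst : IntegrableOn (fun _ : ℝ × ℝ ↦ s ^ 2) (Icc a (a + (s, s))) :=
    integrableOn_const measure_Icc_lt_top.ne
  have hnorm : IntegrableOn (fun p : ℝ × ℝ ↦ ‖q - p‖) (Icc a (a + (s, s))) :=
    (by fun_prop : Continuous fun p : ℝ × ℝ ↦ ‖q - p‖).integrableOn_Icc
  have h : 2 * s * ∫ p in Icc a (a + (s, s)), ‖q - p‖ ≤ 5 / 3 * s ^ 4 := calc
    _ = ∫ p in Icc a (a + (s, s)), 2 * s * ‖q - p‖ := (integral_const_mul _ _).symm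
    _ ≤ ∫ p in Icc a (a + (s, s)), ((q.1 - p.1) ^ 2 + (q.2 - p.2) ^ 2 + s ^ 2) :=
      setIntegral_mono (hnorm.const_mul _) (hint.add hconst)
        fun p ↦ two_mul_mul_norm_le_add_sq s (q - p)
    _ = (∫ p in Icc a (a + (s, s)), (q.1 - p.1) ^ 2)
        + (∫ p in Icc a (a + (s, s)), (q.2 - p.2) ^ 2) + s ^ 2 * s ^ 2 := by
      rw [integral_add hint hconst, integral_add hint₁ hint₂, setIntegral_const,
        volume_real_Icc_add_square a hs.le, smul_eq_mul]
    _ ≤ 5 / 3 * s ^ 4 := by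
      linarith [setIntegral_Icc_add_square_sq_sub_fst_le hs.le hq,
        setIntegral_Icc_add_square_sq_sub_snd_le hs.le hq]
  nlinarith

end Square

theorem average_approximation_error_general
    (lam s : ℝ) (f : ℝ × ℝ → ℝ) (a q : ℝ × ℝ)
    (hlam : 0 ≤ lam) (hs : 0 < s)
    (R : Set (ℝ × ℝ)) (hR : R = Set.Icc a (a + (s, s)))
    (hlip : ∀ p ∈ R, ∀ p' ∈ R, |f p - f p'| ≤ lam * ‖p - p'‖)
    (hq : q ∈ R) :
    |f q - (1 / s ^ 2) * ∫ p in R, f p| ≤ (2 * Real.sqrt 2 / 3) * lam * s := by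
  subst hR
  have hf : IntegrableOn f (Icc a (a + (s, s))) :=
    (LipschitzOnWith.of_dist_le' (K := lam) fun p hp p' hp' ↦ by
      rw [Real.dist_eq, dist_eq_norm]; exact hlip p hp p' hp').continuousOn.integrableOn_Icc
  have hmean := abs_measureReal_mul_sub_setIntegral_le measurableSet_Icc measure_Icc_lt_top.ne hf
    ((by fun_prop : Continuous fun p : ℝ × ℝ ↦ ‖q - p‖).integrableOn_Icc.const_mul lam)
    (fun p hp ↦ hlip q hq p hp)
  rw [integral_const_mul, volume_real_Icc_add_square a hs.le] at hmean
  have hsqrt : 5 / 4 ≤ Real.sqrt 2 := Real.le_sqrt_of_sq_le (by norm_num)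
  calc |f q - (1 / s ^ 2) * ∫ p in Icc a (a + (s, s)), f p|
      = |(s ^ 2 * f q - ∫ p in Icc a (a + (s, s)), f p) / s ^ 2| := by congr 1; field_simp
    _ = |s ^ 2 * f q - ∫ p in Icc a (a + (s, s)), f p| / s ^ 2 := by
        rw [abs_div, abs_of_pos (pow_pos hs 2)]
    _ ≤ lam * (5 / 6 * s ^ 3) / s ^ 2 := by
        gcongr
        exact hmean.trans
          (mul_le_mul_of_nonneg_left (setIntegral_Icc_add_square_norm_sub_le hs hq) hlam)
    _ = 5 / 6 * lam * s := by field_simp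
    _ ≤ (2 * Real.sqrt 2 / 3) * lam * s := by gcongr ?_ * _ * _; linarith

/-- If `f` is nonnegative and `λ`-Lipschitz on an axis-aligned square `R`
of side length `s`, and `h = (1/s²)·∫_R f` is the average of `f` on `R`, then
`|f(x,y) - h| ≤ (2√2/3)·λ·s` for all `(x,y) ∈ R`. -/
theorem average_approximation_error
    (lam s : ℝ) (f : ℝ × ℝ → ℝ) (a q : ℝ × ℝ)
    (hlam : 0 ≤ lam) (hs : 0 < s)
    (R : Set (ℝ × ℝ)) (hR : R = Set.Icc a (a + (s, s)))
    (hf0 : ∀ p ∈ R, 0 ≤ f p)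
    (hlip : ∀ p ∈ R, ∀ p' ∈ R, |f p - f p'| ≤ lam * ‖p - p'‖)
    (hint : IntegrableOn f R)
    (hq : q ∈ R) :
    |f q - (1 / s ^ 2) * ∫ p in R, f p| ≤ (2 * Real.sqrt 2 / 3) * lam * s :=
  average_approximation_error_general lam s f a q hlam hs R hR hlip hq
end
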